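/- arXiv:1806.06375 — 2 statements merged into one kernel-verified Lean document; each statement's English description precedes it below -/
import Mathlib

section
/- Class 𝒫 passes from a subgroup to the whole group (Proposition 2.2(ii)). Let G be a group, H a subgroup of G, and V a finite-dimensional real representation of G. If V, regarded as a representation of H by restricting the action, is of class 𝒫(H), then V is of class 𝒫(G). -/
/-- `W` is a `G`-subrepresentation for the representation `ρ`. -/
def IsSubrep {k G V : Type*} [CommRing k] [Monoid G] [AddCommGroup V] [Module k V]
    (ρ : Representation k G V) (W : Submodule k V) : Prop :=
  ∀ g : G, ∀ v ∈ W, ρ g v ∈ W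

/-- `ρ` is of class 𝒫(G): there is a chain `0 = V₀ < V₁ < ⋯ < V_ℓ = V` of
subrepresentations such that each quotient `V_{i+1}/V_i` is irreducible (no invariant
subspace strictly between `V_i` and `V_{i+1}`) and nontrivial (some `g` and
`v ∈ V_{i+1}` satisfy `ρ g v - v ∉ V_i`). -/
def ClassP {k G V : Type*} [CommRing k] [Monoid G] [AddCommGroup V] [Module k V]
    (ρ : Representation k G V) : Prop :=
  ∃ (ℓ : ℕ) (Vc : ℕ → Submodule k V),
    Vc 0 = ⊥ ∧ Vc ℓ = ⊤ ∧
    (∀ i ≤ ℓ, IsSubrep ρ (Vc i)) ∧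
    (∀ i < ℓ, Vc i < Vc (i + 1)) ∧
    (∀ i < ℓ, ∀ W : Submodule k V, IsSubrep ρ W →
      Vc i ≤ W → W ≤ Vc (i + 1) → W = Vc i ∨ W = Vc (i + 1)) ∧
    (∀ i < ℓ, ∃ g : G, ∃ v ∈ Vc (i + 1), ρ g v - v ∉ Vc i)

lemma IsSubrep.sup {k G V : Type*} [CommRing k] [Monoid G] [AddCommGroup V] [Module k V]
    {ρ : Representation k G V} {A B : Submodule k V}
    (hA : IsSubrep ρ A) (hB : IsSubrep ρ B) : IsSubrep ρ (A ⊔ B) := by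
  intro g v hv
  rcases Submodule.mem_sup.1 hv with ⟨a, ha, b, hb, rfl⟩
  rw [map_add]
  exact Submodule.add_mem_sup (hA g a ha) (hB g b hb)

lemma IsSubrep.inf {k G V : Type*} [CommRing k] [Monoid G] [AddCommGroup V] [Module k V]
    {ρ : Representation k G V} {A B : Submodule k V}
    (hA : IsSubrep ρ A) (hB : IsSubrep ρ B) : IsSubrep ρ (A ⊓ B) := by
  intro g v hv
  exact ⟨hA g v hv.1, hB g v hv.2⟩

/-- Key lemma: if `ρ` is of class 𝒫, then there is no pair of invariant subspaces
`W ≤ W'` with trivial action on the quotient, other than `W' ≤ W`. -/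
lemma ClassP.no_trivial_subquotient {k G V : Type*} [CommRing k] [Monoid G]
    [AddCommGroup V] [Module k V] {ρ : Representation k G V} (hP : ClassP ρ)
    {W W' : Submodule k V} (hW : IsSubrep ρ W) (hW' : IsSubrep ρ W') (hle : W ≤ W')
    (htriv : ∀ g : G, ∀ v ∈ W', ρ g v - v ∈ W) : W' ≤ W := by
  obtain ⟨ℓ, Vc, h0, hT, hsub, hlt, hirr, hnt⟩ := hP
  -- the inductive step
  have step : ∀ i, i < ℓ → Vc i ⊓ W' ≤ W → Vc (i + 1) ⊓ W' ≤ W := by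
    intro i hi hAW
    set A := Vc i with hAdef
    set B := Vc (i + 1) with hBdef
    have hA : IsSubrep ρ A := hsub i (le_of_lt hi)
    have hB : IsSubrep ρ B := hsub (i + 1) hi
    have hAB : A ≤ B := (hlt i hi).le
    have hM : A ⊔ (B ⊓ W') = A ∨ A ⊔ (B ⊓ W') = B :=
      hirr i hi _ (hA.sup (hB.inf hW')) le_sup_left (sup_le hAB inf_le_left)
    rcases hM with hM | hMB
    · -- then B ⊓ W' ≤ A, hence ≤ A ⊓ W' ≤ W
      calc B ⊓ W' ≤ (A ⊔ (B ⊓ W')) ⊓ W' := le_inf le_sup_right inf_le_right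
        _ = A ⊓ W' := by rw [hM]
        _ ≤ W := hAW
    · have hN : A ⊔ (B ⊓ W) = A ∨ A ⊔ (B ⊓ W) = B :=
        hirr i hi _ (hA.sup (hB.inf hW)) le_sup_left (sup_le hAB inf_le_left)
      rcases hN with hNA | hN
      · -- B ⊓ W ≤ A contradicts nontriviality of the factor B/A
        exfalso
        have hBWA : B ⊓ W ≤ A := le_sup_right.trans hNA.le
        obtain ⟨g, v, hvB, hv⟩ := hnt i hi
        apply hv
        have hvM : v ∈ A ⊔ (B ⊓ W') := by rw [hMB]; exact hvB
        rcases Submodule.mem_sup.1 hvM with ⟨a, ha, w, hw, rfl⟩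
        have h1 : ρ g a - a ∈ A := Submodule.sub_mem _ (hA g a ha) ha
        have h2 : ρ g w - w ∈ A :=
          hBWA ⟨Submodule.sub_mem _ (hB g w hw.1) hw.1, htriv g w hw.2⟩
        have heq : ρ g (a + w) - (a + w) = (ρ g a - a) + (ρ g w - w) := by
          rw [map_add]; abel
        rw [heq]
        exact Submodule.add_mem _ h1 h2
      · -- B ≤ A ⊔ (B ⊓ W) gives B ⊓ W' ≤ W by modularity
        intro x hx
        have hxB : x ∈ A ⊔ (B ⊓ W) := by rw [hN]; exact hx.1
        rcases Submodule.mem_sup.1 hxB with ⟨a, ha, w, hw, rfl⟩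
        have haW : a ∈ W := hAW ⟨ha, by
          have : a = (a + w) - w := by abel
          rw [this]
          exact Submodule.sub_mem _ hx.2 (hle hw.2)⟩
        exact Submodule.add_mem _ haW hw.2
  have hall : ∀ j, j ≤ ℓ → Vc j ⊓ W' ≤ W := by
    intro j
    induction j with
    | zero => intro _; rw [h0]; simp
    | succ m ihm => intro hm; exact step m hm (ihm (le_of_lt hm))
  have := hall ℓ le_rfl
  rwa [hT, top_inf_eq] at this

/-- Existence of a composition series below any invariant subspace. -/
lemma exists_comp_series {G V : Type*} [Group G] [AddCommGroup V] [Module ℝ V]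
    [FiniteDimensional ℝ V] (ρ : Representation ℝ G V) :
    ∀ n : ℕ, ∀ U : Submodule ℝ V, Module.finrank ℝ U = n → IsSubrep ρ U →
    ∃ (ℓ : ℕ) (Vc : ℕ → Submodule ℝ V), Vc 0 = ⊥ ∧ Vc ℓ = U ∧
      (∀ i ≤ ℓ, IsSubrep ρ (Vc i)) ∧
      (∀ i < ℓ, Vc i < Vc (i + 1)) ∧
      (∀ i < ℓ, ∀ W : Submodule ℝ V, IsSubrep ρ W →
        Vc i ≤ W → W ≤ Vc (i + 1) → W = Vc i ∨ W = Vc (i + 1)) := by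
  intro n
  induction n using Nat.strong_induction_on with
  | _ n ih =>
    intro U hn hU
    by_cases hbot : U = ⊥
    · refine ⟨0, fun _ => ⊥, rfl, hbot.symm, ?_, ?_, ?_⟩
      · intro i _ g v hv
        rw [Submodule.mem_bot] at hv ⊢
        rw [hv, map_zero]
      · intro i hi; omega
      · intro i hi; omega
    · -- pick a maximal proper invariant subspace of U
      set S : Set (Submodule ℝ V) := {X | IsSubrep ρ X ∧ X < U} with hS
      have hbotS : (⊥ : Submodule ℝ V) ∈ S := by
        refine ⟨fun g v hv => ?_, bot_lt_iff_ne_bot.2 hbot⟩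
        rw [Submodule.mem_bot] at hv ⊢
        rw [hv, map_zero]
      set s : Set ℕ := (fun X : Submodule ℝ V => Module.finrank ℝ X) '' S with hs
      have hsne : s.Nonempty := ⟨_, ⟨⊥, hbotS, rfl⟩⟩
      have hsbdd : BddAbove s := by
        refine ⟨Module.finrank ℝ V, ?_⟩
        rintro m ⟨X, _, rfl⟩
        exact Submodule.finrank_le X
      have hmem := Nat.sSup_mem hsne hsbdd
      rw [hs, Set.mem_image] at hmem
      obtain ⟨X, hXS, hXrank⟩ := hmem
      have hXsub : IsSubrep ρ X := hXS.1
      have hXlt : X < U := hXS.2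
      have hmax : ∀ W : Submodule ℝ V, IsSubrep ρ W → X ≤ W → W ≤ U →
          W = X ∨ W = U := by
        intro W hWsub hXW hWU
        by_cases hWUeq : W = U
        · exact Or.inr hWUeq
        · left
          have hWS : W ∈ S := ⟨hWsub, lt_of_le_of_ne hWU hWUeq⟩
          have h1 : Module.finrank ℝ W ≤ Module.finrank ℝ X := by
            rw [hXrank]
            exact le_csSup hsbdd ⟨W, hWS, rfl⟩
          exact (Submodule.eq_of_le_of_finrank_le hXW h1).symm
      have hrank : Module.finrank ℝ X < n := by
        rw [← hn]
        exact Submodule.finrank_lt_finrank_of_lt hXlt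
      obtain ⟨ℓ, Vc, h0, hX, hsub, hltc, hirr⟩ := ih _ hrank X rfl hXsub
      refine ⟨ℓ + 1, fun i => if i ≤ ℓ then Vc i else U, ?_, ?_, ?_, ?_, ?_⟩
      · simp [h0]
      · simp
      · intro i hi
        by_cases h : i ≤ ℓ
        · simpa [h] using hsub i h
        · simpa [h] using hU
      · intro i hi
        rcases Nat.lt_succ_iff_lt_or_eq.1 hi with h | rfl
        · have h1 : i ≤ ℓ := h.le
          have h2 : i + 1 ≤ ℓ := h
          simpa [h1, h2] using hltc i h
        · have : ¬ (i + 1 ≤ i) := by omega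
          simpa [le_refl, this, hX] using hXlt
      · intro i hi W hWsub hle1 hle2
        rcases Nat.lt_succ_iff_lt_or_eq.1 hi with h | rfl
        · have h1 : i ≤ ℓ := h.le
          have h2 : i + 1 ≤ ℓ := h
          simp only [h1, h2, if_pos] at hle1 hle2 ⊢
          exact hirr i h W hWsub hle1 hle2
        · have hne : ¬ (i + 1 ≤ i) := by omega
          simp only [le_refl, if_pos, hne, if_neg, hX] at hle1 hle2 ⊢
          exact hmax W hWsub hle1 hle2

/-- Class 𝒫 passes from a subgroup to the whole group (Proposition 2.2(ii)). -/
theorem classP_of_subgroup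
    {G V : Type*} [Group G] [AddCommGroup V] [Module ℝ V] [FiniteDimensional ℝ V]
    (H : Subgroup G) (ρ : Representation ℝ G V)
    (h : ClassP (ρ.comp H.subtype)) : ClassP ρ := by
  obtain ⟨ℓ, Vc, h0, hT, hsub, hlt, hirr⟩ :=
    exists_comp_series ρ (Module.finrank ℝ (⊤ : Submodule ℝ V)) ⊤ rfl
      (fun g v _ => Submodule.mem_top)
  refine ⟨ℓ, Vc, h0, hT, hsub, hlt, hirr, ?_⟩
  intro i hi
  by_contra hc
  push_neg at hc
  have hWsub : IsSubrep (ρ.comp H.subtype) (Vc i) := by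
    intro g v hv
    exact hsub i hi.le ((g : G)) v hv
  have hW'sub : IsSubrep (ρ.comp H.subtype) (Vc (i + 1)) := by
    intro g v hv
    exact hsub (i + 1) hi ((g : G)) v hv
  have htriv : ∀ g : H, ∀ v ∈ Vc (i + 1), (ρ.comp H.subtype) g v - v ∈ Vc i := by
    intro g v hv
    exact hc (g : G) v hv
  exact absurd (ClassP.no_trivial_subquotient h hWsub hW'sub (hlt i hi).le htriv)
    (not_le_of_gt (hlt i hi))
end

section
/- Approximate subgroups of intermediate dimension in ℝ^d (abelian case of Proposition 1.3). Fix an integer d ≥ 1, r > 0 and κ ∈ (0, 1]. Equip ℝ^d with the sup norm. There exist constants c > 0, C > 0 and δ₀ > 0, depending only on d, r and κ, such that for all δ ∈ (0, δ₀) the set P = { δ^{κ} x : x ∈ ℤ^d, |x_j| ≤ δ^{-κ} r for all j } ⊆ ℝ^d satisfies: (i) c δ^{-dκ} ≤ N(P, δ) ≤ C δ^{-dκ}; (ii) N(P + P + P, δ) ≤ C · N(P, δ); (iii) for every linear subspace W of ℝ^d with W ≠ ℝ^d and every ρ with δ ≤ ρ ≤ 1, N(π_W(P), ρ) ≥ c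 ρ^{-κ}, where π_W : ℝ^d → ℝ^d / W is the canonical projection and ℝ^d / W carries the quotient norm; (iv) for every linear subspace W of ℝ^d with W ≠ ℝ^d there exists p ∈ P with dist(p, W) ≥ c. -/
open Metric Pointwise

/-- The covering number `N(S,ρ)`: the least cardinality of a cover of `S` by closed
balls of radius `ρ` (equal to `0` by convention if no finite cover exists; all sets
considered below admit finite covers). -/
noncomputable def coveringNumber {α : Type*} [PseudoMetricSpace α] (S : Set α) (ρ : ℝ) : ℕ :=
  sInf {n : ℕ | ∃ T : Finset α, T.card = n ∧ S ⊆ ⋃ t ∈ T, Metric.closedBall t ρ}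

/-!
`P` consists of the points of the lattice `δ^κ ℤ^d` in the cube of radius `r`, and the lattice
step `δ^κ` lies between `δ` and `r / 4`. Covering `P` by its own points and packing it with the
`3δ^κ`-sublattice, whose points are more than `2δ` apart, gives `N(P, δ) ≍ (r / δ^κ)^d`, and
`P + P + P` lies in the analogous set for the cube of radius `3r`. For a proper subspace `W`,
rounding the multiples `t • v` of a unit vector `v` with `dist(v, W) = 1` to the lattice gives
points of `P` whose distance to `W` is within `δ^κ` of any prescribed `t ≤ r - δ^κ`; this gives
(iv), and for (iii) about `r / ρ^κ` points whose images in `ℝ^d / W` are `2ρ`-separated.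
-/

section CoveringNumber

variable {X : Type*} [PseudoMetricSpace X] {S : Set X} {ρ : ℝ}

lemma coveringNumber_le_card (T : Finset X) (hT : S ⊆ ⋃ t ∈ T, closedBall t ρ) :
    coveringNumber S ρ ≤ T.card :=
  Nat.sInf_le ⟨T, rfl, hT⟩

lemma coveringNumber_le_card_of_subset_image {ι : Type*} {I : Finset ι} {g : ι → X}
    (hρ : 0 ≤ ρ) (hS : S ⊆ g '' I) : coveringNumber S ρ ≤ I.card := by
  classical
  refine (coveringNumber_le_card (I.image g) fun x hx => ?_).trans Finset.card_image_le
  obtain ⟨i, hi, rfl⟩ := hS hx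
  exact Set.mem_biUnion (Finset.mem_image_of_mem g hi) (mem_closedBall_self hρ)

lemma card_le_coveringNumber {ι : Type*} {I : Finset ι} {x : ι → X} (hS : S.Finite)
    (hρ : 0 ≤ ρ) (hxS : ∀ i ∈ I, x i ∈ S)
    (hsep : ∀ i ∈ I, ∀ j ∈ I, i ≠ j → 2 * ρ < dist (x i) (x j)) :
    I.card ≤ coveringNumber S ρ := by
  have hcover : {n | ∃ T : Finset X, T.card = n ∧ S ⊆ ⋃ t ∈ T, closedBall t ρ}.Nonempty :=
    ⟨_, hS.toFinset, rfl, fun y hy =>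
      Set.mem_biUnion (hS.mem_toFinset.2 hy) (mem_closedBall_self hρ)⟩
  obtain ⟨T, hTcard, hT⟩ := Nat.sInf_mem hcover
  rw [_root_.coveringNumber, ← hTcard]
  refine Finset.card_le_card_of_forall_subsingleton (fun i t => x i ∈ closedBall t ρ)
    (fun i hi => by simpa using hT (hxS i hi)) fun t _ i hi j hj => ?_
  by_contra hij
  linarith [hsep i hi.1 j hj.1 hij, dist_triangle_right (x i) (x j) t,
    mem_closedBall.1 hi.2, mem_closedBall.1 hj.2]

lemma div_le_coveringNumber_of_lipschitz {φ : X → ℝ} {e R : ℝ} (hφ : LipschitzWith 1 φ)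
    (hS : S.Finite) (hρ : 0 < ρ) (hR : 0 ≤ R)
    (hdense : ∀ t ∈ Set.Icc 0 R, ∃ x ∈ S, |φ x - t| ≤ e) :
    R / (3 * ρ + 2 * e) ≤ coveringNumber S ρ := by
  obtain ⟨x₀, -, he⟩ := hdense 0 ⟨le_rfl, hR⟩
  set s := 3 * ρ + 2 * e
  have hs : 0 < s := by linarith [(abs_nonneg _).trans he]
  set n := ⌊R / s⌋₊
  have hks : ∀ k : Fin (n + 1), (k : ℝ) * s ∈ Set.Icc 0 R := fun k =>
    ⟨by positivity, (le_div_iff₀ hs).1 <|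
      (Nat.cast_le.2 (Nat.lt_succ_iff.1 k.2)).trans (Nat.floor_le (by positivity))⟩
  choose x hxS hx using fun k => hdense _ (hks k)
  have hsep : ∀ k l : Fin (n + 1), k < l → 2 * ρ < dist (x k) (x l) := by
    intro k l hkl
    have hkl : ((k : ℕ) : ℝ) * s + s ≤ (l : ℕ) * s := by
      rw [← add_one_mul]; gcongr; exact_mod_cast hkl
    have hφkl := hφ.dist_le_mul (x l) (x k)
    rw [NNReal.coe_one, one_mul, dist_comm (x l), Real.dist_eq] at hφkl
    linarith [le_abs_self (φ (x l) - φ (x k)), abs_le.1 (hx k), abs_le.1 (hx l)]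
  have hcard := card_le_coveringNumber (I := Finset.univ) hS hρ.le (fun k _ => hxS k)
    fun k _ l _ hkl => hkl.lt_or_gt.elim (hsep k l) fun h => dist_comm (x k) (x l) ▸ hsep l k h
  rw [Finset.card_univ, Fintype.card_fin] at hcard
  calc R / s ≤ n + 1 := (Nat.lt_floor_add_one _).le
    _ ≤ coveringNumber S ρ := by exact_mod_cast hcard

end CoveringNumber

lemma Submodule.Quotient.norm_mk_eq_infDist {R E : Type*} [Ring R] [SeminormedAddCommGroup E]
    [Module R E] {W : Submodule R E} (x : E) :
    ‖Submodule.Quotient.mk (p := W) x‖ = infDist x W :=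
  QuotientAddGroup.norm_mk (S := W.toAddSubgroup) x

lemma Submodule.exists_norm_eq_one_norm_mk_eq_one {E : Type*} [NormedAddCommGroup E]
    [NormedSpace ℝ E] [FiniteDimensional ℝ E] {W : Submodule ℝ E} (hW : W ≠ ⊤) :
    ∃ v : E, ‖v‖ = 1 ∧ ‖Submodule.Quotient.mk (p := W) v‖ = 1 := by
  obtain ⟨u, -, hu⟩ := SetLike.exists_of_lt hW.lt_top
  obtain ⟨w, hw, hdist⟩ :=
    W.closed_of_finiteDimensional.exists_infDist_eq_dist ⟨0, W.zero_mem⟩ u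
  have hmk : ‖Submodule.Quotient.mk (p := W) (u - w)‖ = ‖u - w‖ := by
    rw [Submodule.Quotient.mk_sub, (Submodule.Quotient.mk_eq_zero W).2 hw, sub_zero,
      ← dist_eq_norm, ← hdist]
    exact Submodule.Quotient.norm_mk_eq_infDist u
  have hpos : ‖u - w‖ ≠ 0 := norm_ne_zero_iff.2 (sub_ne_zero.2 fun h => hu (h ▸ hw))
  refine ⟨‖u - w‖⁻¹ • (u - w), ?_, ?_⟩
  · rw [norm_smul, norm_inv, norm_norm, inv_mul_cancel₀ hpos]
  · rw [Submodule.Quotient.mk_smul, norm_smul, norm_inv, norm_norm, hmk, inv_mul_cancel₀ hpos]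

section Lattice

def latticeBox (ι : Type*) (h A : ℝ) : Set (ι → ℝ) :=
  {p | ∃ x : ι → ℤ, (∀ j, |(x j : ℝ)| ≤ A) ∧ p = fun j => h * x j}

noncomputable def intBox (ι : Type*) [Fintype ι] [DecidableEq ι] (M : ℕ) : Finset (ι → ℤ) :=
  Fintype.piFinset fun _ => Finset.Icc (-(M : ℤ)) M

variable {ι : Type*} {h A : ℝ}

lemma latticeBox_add_subset {B : ℝ} :
    latticeBox ι h A + latticeBox ι h B ⊆ latticeBox ι h (A + B) := by
  rintro _ ⟨_, ⟨x, hx, rfl⟩, _, ⟨y, hy, rfl⟩, rfl⟩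
  refine ⟨x + y, fun j => ?_, by ext j; simp [mul_add]⟩
  rw [Pi.add_apply, Int.cast_add]
  exact (abs_add_le _ _).trans (add_le_add (hx j) (hy j))

variable [Fintype ι]

lemma abs_le_dist_mul_intCast_of_ne {x y : ι → ℤ} (hxy : x ≠ y) :
    |h| ≤ dist (fun j => h * (x j : ℝ)) (fun j => h * (y j : ℝ)) := by
  obtain ⟨j, hj⟩ := Function.ne_iff.1 hxy
  calc |h| ≤ |h| * |((x j - y j : ℤ) : ℝ)| :=
        le_mul_of_one_le_right (abs_nonneg h)
          (by exact_mod_cast Int.one_le_abs (sub_ne_zero.2 hj))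
    _ = dist (h * (x j : ℝ)) (h * y j) := by
        rw [Real.dist_eq, ← abs_mul, Int.cast_sub, mul_sub]
    _ ≤ _ := dist_le_pi_dist (fun j => h * (x j : ℝ)) (fun j => h * (y j : ℝ)) j

lemma exists_mem_latticeBox_dist_le (hh : 0 < h) {w : ι → ℝ} (hw : ‖w‖ ≤ h * (A - 1)) :
    ∃ p ∈ latticeBox ι h A, dist p w ≤ h := by
  have hq : ∀ j, |w j / h| ≤ A - 1 := fun j => by
    rw [abs_div, abs_of_pos hh, div_le_iff₀' hh]
    exact (norm_le_pi_norm w j).trans hw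
  refine ⟨_, ⟨fun j => ⌊w j / h⌋, fun j => ?_, rfl⟩, (dist_pi_le_iff hh.le).2 fun j => ?_⟩
  · rw [abs_le]
    constructor <;>
      linarith [Int.floor_le (w j / h), Int.lt_floor_add_one (w j / h), abs_le.1 (hq j)]
  · rw [Real.dist_eq, ← mul_div_cancel₀ (w j) hh.ne', ← mul_sub, abs_mul, abs_of_pos hh]
    refine mul_le_of_le_one_right hh.le (abs_le.2 ⟨?_, ?_⟩) <;>
      linarith [Int.floor_le (w j / h), Int.lt_floor_add_one (w j / h)]

lemma exists_mem_latticeBox_abs_norm_mk_sub_le {W : Submodule ℝ (ι → ℝ)} (hW : W ≠ ⊤)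
    (hh : 0 < h) {t : ℝ} (ht : t ∈ Set.Icc 0 (h * (A - 1))) :
    ∃ p ∈ latticeBox ι h A, |‖Submodule.Quotient.mk (p := W) p‖ - t| ≤ h := by
  obtain ⟨v, hv, hvW⟩ := Submodule.exists_norm_eq_one_norm_mk_eq_one hW
  have htv : ‖t • v‖ ≤ h * (A - 1) := by
    rw [norm_smul, hv, mul_one, Real.norm_of_nonneg ht.1]; exact ht.2
  obtain ⟨p, hp, hpv⟩ := exists_mem_latticeBox_dist_le hh htv
  refine ⟨p, hp, ?_⟩
  calc |‖Submodule.Quotient.mk (p := W) p‖ - t|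
      = |‖Submodule.Quotient.mk (p := W) p‖ - ‖Submodule.Quotient.mk (p := W) (t • v)‖| := by
        rw [Submodule.Quotient.mk_smul, norm_smul, hvW, mul_one, Real.norm_of_nonneg ht.1]
    _ ≤ ‖Submodule.Quotient.mk (p := W) (p - t • v)‖ := by
        rw [Submodule.Quotient.mk_sub]; exact abs_norm_sub_norm_le _ _
    _ ≤ h := (Submodule.Quotient.norm_mk_le W _).trans ((dist_eq_norm _ _).symm.trans_le hpv)

lemma exists_mem_latticeBox_le_infDist {W : Submodule ℝ (ι → ℝ)} (hW : W ≠ ⊤)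
    (hh : 0 < h) (hA : 1 ≤ A) : ∃ p ∈ latticeBox ι h A, h * (A - 2) ≤ infDist p W := by
  obtain ⟨p, hp, hpt⟩ := exists_mem_latticeBox_abs_norm_mk_sub_le (A := A) hW hh
    ⟨mul_nonneg hh.le (by linarith), le_rfl⟩
  refine ⟨p, hp, ?_⟩
  rw [← Submodule.Quotient.norm_mk_eq_infDist]
  linarith [(abs_le.1 hpt).1]

variable [DecidableEq ι]

@[simp]
lemma mem_intBox {M : ℕ} {x : ι → ℤ} : x ∈ intBox ι M ↔ ∀ j, |x j| ≤ M := by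
  simp [intBox, abs_le]

lemma card_intBox (M : ℕ) : (intBox ι M).card = (2 * M + 1) ^ Fintype.card ι := by
  simp only [intBox, Fintype.card_piFinset, Int.card_Icc, Finset.prod_const, Finset.card_univ]
  congr 1
  omega

lemma latticeBox_subset_image_intBox (hA : 0 ≤ A) :
    latticeBox ι h A ⊆ (fun (x : ι → ℤ) j => h * (x j : ℝ)) '' intBox ι ⌊A⌋₊ := by
  rintro _ ⟨x, hx, rfl⟩
  refine ⟨x, mem_intBox.2 fun j => ?_, rfl⟩
  rw [Int.natCast_floor_eq_floor hA, Int.le_floor, Int.cast_abs]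
  exact hx j

lemma finite_latticeBox (hA : 0 ≤ A) : (latticeBox ι h A).Finite :=
  ((intBox ι ⌊A⌋₊).finite_toSet.image _).subset (latticeBox_subset_image_intBox hA)

lemma coveringNumber_le_of_subset_latticeBox {S : Set (ι → ℝ)} {ρ : ℝ} (hρ : 0 ≤ ρ)
    (hA : 0 ≤ A) (hS : S ⊆ latticeBox ι h A) :
    (coveringNumber S ρ : ℝ) ≤ (2 * A + 1) ^ Fintype.card ι := by
  have hcard := coveringNumber_le_card_of_subset_image hρ
    (hS.trans (latticeBox_subset_image_intBox hA))
  rw [card_intBox] at hcard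
  calc (coveringNumber S ρ : ℝ) ≤ ((2 * ⌊A⌋₊ + 1 : ℕ) : ℝ) ^ Fintype.card ι := by
        exact_mod_cast hcard
    _ ≤ (2 * A + 1) ^ Fintype.card ι := by gcongr; push_cast; linarith [Nat.floor_le hA]

lemma div_four_pow_le_coveringNumber_latticeBox {δ : ℝ} (hδ : 0 < δ) (hδh : δ ≤ h)
    (hA : 0 ≤ A) : (A / 4) ^ Fintype.card ι ≤ coveringNumber (latticeBox ι h A) δ := by
  have hcard := card_le_coveringNumber (I := intBox ι ⌊A / 3⌋₊)
    (x := fun (x : ι → ℤ) j => 3 * h * (x j : ℝ)) (finite_latticeBox hA) hδ.le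
    (fun x hx => ⟨fun j => 3 * x j, fun j => ?_, by ext j; push_cast; ring⟩) fun x _ y _ hxy => ?_
  · rw [card_intBox] at hcard
    calc (A / 4) ^ Fintype.card ι ≤ ((2 * ⌊A / 3⌋₊ + 1 : ℕ) : ℝ) ^ Fintype.card ι := by
          gcongr
          push_cast
          rcases le_total A 4 with hA4 | hA4
          · linarith [Nat.cast_nonneg (α := ℝ) ⌊A / 3⌋₊]
          · linarith [Nat.lt_floor_add_one (A / 3)]
      _ ≤ coveringNumber (latticeBox ι h A) δ := by exact_mod_cast hcard
  · have hxj : |((x j : ℤ) : ℝ)| ≤ ⌊A / 3⌋₊ := by exact_mod_cast mem_intBox.1 hx j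
    push_cast
    rw [abs_mul, abs_of_pos three_pos]
    linarith [Nat.floor_le (div_nonneg hA zero_le_three)]
  · have := abs_le_dist_mul_intCast_of_ne (h := 3 * h) hxy
    rw [abs_of_pos (by linarith)] at this
    linarith

lemma coveringNumber_add_add_latticeBox_le {δ : ℝ} (hδ : 0 < δ) (hδh : δ ≤ h) (hA : 1 ≤ A) :
    (coveringNumber (latticeBox ι h A + latticeBox ι h A + latticeBox ι h A) δ : ℝ) ≤
      28 ^ Fintype.card ι * coveringNumber (latticeBox ι h A) δ :=
  calc _ ≤ (2 * (A + A + A) + 1) ^ Fintype.card ι :=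
        coveringNumber_le_of_subset_latticeBox hδ.le (by linarith)
          ((Set.add_subset_add_right latticeBox_add_subset).trans latticeBox_add_subset)
    _ ≤ (28 * (A / 4)) ^ Fintype.card ι := by gcongr; linarith
    _ ≤ _ := by
        rw [mul_pow]
        gcongr
        exact div_four_pow_le_coveringNumber_latticeBox hδ hδh (by linarith)

lemma div_le_coveringNumber_mk_latticeBox {W : Submodule ℝ (ι → ℝ)} (hW : W ≠ ⊤)
    (hh : 0 < h) (hA : 1 ≤ A) {ρ : ℝ} (hρ : 0 < ρ) :
    h * (A - 1) / (3 * ρ + 2 * h) ≤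
      coveringNumber (Submodule.Quotient.mk (p := W) '' latticeBox ι h A) ρ :=
  div_le_coveringNumber_of_lipschitz lipschitzWith_one_norm
    ((finite_latticeBox (by linarith)).image _) hρ (mul_nonneg hh.le (by linarith)) fun t ht =>
      let ⟨p, hp, hpt⟩ := exists_mem_latticeBox_abs_norm_mk_sub_le hW hh ht
      ⟨_, Set.mem_image_of_mem _ hp, hpt⟩

end Lattice

theorem approximate_subgroup_intermediate_dimension_general
    (d : ℕ) (r κ : ℝ) (hr : 0 < r) (hκ₀ : 0 < κ) (hκ₁ : κ ≤ 1) :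
    ∃ c C δ₀ : ℝ, 0 < c ∧ 0 < C ∧ 0 < δ₀ ∧
      ∀ δ : ℝ, 0 < δ → δ < δ₀ →
        ∀ P : Set (Fin d → ℝ),
          P = {p | ∃ x : Fin d → ℤ,
                (∀ j, |(x j : ℝ)| ≤ δ ^ (-κ) * r) ∧ p = fun j => δ ^ κ * (x j : ℝ)} →
          -- (i)
          (c * δ ^ (-(d * κ)) ≤ (coveringNumber P δ : ℝ) ∧
            (coveringNumber P δ : ℝ) ≤ C * δ ^ (-(d * κ))) ∧
          -- (ii)
          ((coveringNumber (P + P + P) δ : ℝ) ≤ C * (coveringNumber P δ : ℝ)) ∧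
          -- (iii)
          (∀ W : Submodule ℝ (Fin d → ℝ), W ≠ ⊤ →
            ∀ ρ : ℝ, δ ≤ ρ → ρ ≤ 1 →
              c * ρ ^ (-κ) ≤
                (coveringNumber (Submodule.Quotient.mk (p := W) '' P) ρ : ℝ)) ∧
          -- (iv)
          (∀ W : Submodule ℝ (Fin d → ℝ), W ≠ ⊤ →
            ∃ p ∈ P, c ≤ Metric.infDist p (W : Set (Fin d → ℝ))) := by
  refine ⟨min ((r / 4) ^ d) (r / 8), max ((3 * r) ^ d) (28 ^ d), min 1 ((r / 4) ^ κ⁻¹),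
    by positivity, by positivity, by positivity, fun δ hδ hδ₀ P hP => ?_⟩
  obtain rfl : P = latticeBox (Fin d) (δ ^ κ) (δ ^ (-κ) * r) := hP
  set h := δ ^ κ
  set A := δ ^ (-κ) * r with hA_def
  have hh : 0 < h := by positivity
  have hδh : δ ≤ h := Real.self_le_rpow_of_le_one hδ.le (hδ₀.trans_le (min_le_left _ _)).le hκ₁
  have hhr : h ≤ r / 4 :=
    calc h ≤ ((r / 4) ^ κ⁻¹) ^ κ :=
          Real.rpow_le_rpow hδ.le (hδ₀.trans_le (min_le_right _ _)).le hκ₀.le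
      _ = r / 4 := Real.rpow_inv_rpow (by positivity) hκ₀.ne'
  have hhA : h * A = r := by
    rw [← mul_assoc, ← Real.rpow_add hδ, add_neg_cancel, Real.rpow_zero, one_mul]
  have hA : 4 ≤ A := le_of_mul_le_mul_left (by linarith) hh
  have hpow : δ ^ (-(d * κ)) = (δ ^ (-κ)) ^ d := by
    rw [← Real.rpow_natCast, ← Real.rpow_mul hδ.le]; ring_nf
  have hlow := div_four_pow_le_coveringNumber_latticeBox (ι := Fin d) (A := A) hδ hδh (by linarith)
  have hup := coveringNumber_le_of_subset_latticeBox (ι := Fin d) (h := h) (A := A) hδ.le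
    (by linarith) subset_rfl
  have hsum := coveringNumber_add_add_latticeBox_le (ι := Fin d) (A := A) hδ hδh (by linarith)
  rw [Fintype.card_fin] at hlow hup hsum
  refine ⟨⟨?_, ?_⟩, ?_, fun W hW ρ hδρ hρ1 => ?_, fun W hW => ?_⟩
  · calc min ((r / 4) ^ d) (r / 8) * δ ^ (-(d * κ)) ≤ (r / 4) ^ d * (δ ^ (-κ)) ^ d := by
          rw [hpow]; gcongr; exact min_le_left _ _
      _ = (A / 4) ^ d := by rw [← mul_pow, hA_def]; ring
      _ ≤ _ := hlow
  · calc _ ≤ (2 * A + 1) ^ d := hup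
      _ ≤ (3 * A) ^ d := by gcongr; linarith
      _ = (3 * r) ^ d * δ ^ (-(d * κ)) := by rw [hpow, ← mul_pow, hA_def]; ring
      _ ≤ _ := by gcongr; exact le_max_left _ _
  · exact hsum.trans (by gcongr; exact le_max_right _ _)
  · have hρ : 0 < ρ := hδ.trans_le hδρ
    have hρκ : ρ ≤ ρ ^ κ := Real.self_le_rpow_of_le_one hρ.le hρ1 hκ₁
    have hhρ : h ≤ ρ ^ κ := Real.rpow_le_rpow hδ.le hδρ hκ₀.le
    calc min ((r / 4) ^ d) (r / 8) * ρ ^ (-κ) ≤ 3 * r / 20 / ρ ^ κ := by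
          rw [Real.rpow_neg hρ.le, ← div_eq_mul_inv]
          gcongr
          linarith [min_le_right ((r / 4) ^ d) (r / 8)]
      _ = 3 * r / 4 / (5 * ρ ^ κ) := by ring
      _ ≤ h * (A - 1) / (3 * ρ + 2 * h) := by gcongr <;> linarith
      _ ≤ _ := div_le_coveringNumber_mk_latticeBox hW hh (by linarith) hρ
  · obtain ⟨p, hp, hpW⟩ := exists_mem_latticeBox_le_infDist hW hh (by linarith : 1 ≤ A)
    exact ⟨p, hp, by linarith [min_le_right ((r / 4) ^ d) (r / 8)]⟩

/-- Approximate subgroups of intermediate dimension in `ℝ^d` (abelian case of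
Proposition 1.3), with `ℝ^d = Fin d → ℝ` carrying the sup norm. -/
theorem approximate_subgroup_intermediate_dimension
    (d : ℕ) (hd : 1 ≤ d) (r κ : ℝ) (hr : 0 < r) (hκ₀ : 0 < κ) (hκ₁ : κ ≤ 1) :
    ∃ c C δ₀ : ℝ, 0 < c ∧ 0 < C ∧ 0 < δ₀ ∧
      ∀ δ : ℝ, 0 < δ → δ < δ₀ →
        ∀ P : Set (Fin d → ℝ),
          P = {p | ∃ x : Fin d → ℤ,
                (∀ j, |(x j : ℝ)| ≤ δ ^ (-κ) * r) ∧ p = fun j => δ ^ κ * (x j : ℝ)} →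
          -- (i)
          (c * δ ^ (-(d * κ)) ≤ (coveringNumber P δ : ℝ) ∧
            (coveringNumber P δ : ℝ) ≤ C * δ ^ (-(d * κ))) ∧
          -- (ii)
          ((coveringNumber (P + P + P) δ : ℝ) ≤ C * (coveringNumber P δ : ℝ)) ∧
          -- (iii)
          (∀ W : Submodule ℝ (Fin d → ℝ), W ≠ ⊤ →
            ∀ ρ : ℝ, δ ≤ ρ → ρ ≤ 1 →
              c * ρ ^ (-κ) ≤
                (coveringNumber (Submodule.Quotient.mk (p := W) '' P) ρ : ℝ)) ∧
          -- (iv)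
          (∀ W : Submodule ℝ (Fin d → ℝ), W ≠ ⊤ →
            ∃ p ∈ P, c ≤ Metric.infDist p (W : Set (Fin d → ℝ))) :=
  approximate_subgroup_intermediate_dimension_general d r κ hr hκ₀ hκ₁
end
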